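/- arXiv:2504.09678 — 2 statements merged into one kernel-verified Lean document; each statement's English description precedes it below -/
import Mathlib

section
/- Let Γ = (V, H, s, ι, σ) be a ribbon graph whose underlying multigraph is a tree with edge set E. Then the permutation (ι ∘ σ)² of H has exactly two orbits, each of cardinality |E|. -/
/-
Write `τ = ι * σ`. In a tree every edge `{h₀, ι h₀}` is a bridge; label each vertex by the side
of that bridge it lies on. A step `x ↦ τ x` crosses the edge `σ x`, so the label of `s x` changes
exactly when `τ x ∈ {h₀, ι h₀}`. Around a closed `τ`-orbit the label changes an even number of
times, so every `τ`-orbit contains both or neither of `h₀`, `ι h₀`. Orbits of `τ` are thus closed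
under `ι`, hence under `σ = ι * τ`, and connectedness makes `τ` one cycle of length `|H| = 2|E|`.
Its square has the two orbits of `a` and `τ a`, which `τ` swaps, so each has `|E|` elements.
-/

/-- A ribbon graph: a finite set `V` of vertices, a finite set `H` of half-edges,
an incidence map `s : H → V`, a fixed-point-free involution `ι` pairing half-edges into
edges, and a permutation `σ` whose orbits are exactly the fibers of `s`. -/
structure RibbonGraph (V H : Type) where
  s : H → V
  ι : Equiv.Perm H
  σ : Equiv.Perm H
  ι_invol : ∀ h, ι (ι h) = h
  ι_ne : ∀ h, ι h ≠ h
  orbit_fiber : ∀ g h, σ.SameCycle g h ↔ s g = s h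

/-- The underlying multigraph of a ribbon graph, as a simple graph: `v` is adjacent to `w`
iff some edge `{h, ι h}` joins them. -/
def RibbonGraph.underlying {V H : Type} (r : RibbonGraph V H) : SimpleGraph V :=
  SimpleGraph.fromRel (fun v w => ∃ h, r.s h = v ∧ r.s (r.ι h) = w)

/-- The underlying multigraph of the ribbon graph is a tree: the underlying simple graph is
connected and acyclic, there are no loops, and no two distinct edges have the same pair of
endpoints. -/
def RibbonGraph.IsTreeRibbon {V H : Type} (r : RibbonGraph V H) : Prop :=
  r.underlying.IsTree ∧ (∀ h, r.s h ≠ r.s (r.ι h)) ∧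
    ∀ g h, r.s g = r.s h → r.s (r.ι g) = r.s (r.ι h) → g = h ∨ g = r.ι h

namespace Equiv.Perm

variable {α : Type*} {f : Perm α} {x y : α}

theorem sameCycle_pow_apply_apply {n : ℕ} :
    (f ^ n).SameCycle (f x) (f y) ↔ (f ^ n).SameCycle x y := by
  have hconj : f * f ^ n * f⁻¹ = f ^ n := by
    rw [(Commute.self_pow f n).eq, mul_inv_cancel_right]
  simpa [hconj] using sameCycle_conj (g := f) (f := f ^ n) (x := f x) (y := f y)

theorem SameCycle.sameCycle_sq_or_sameCycle_sq_apply (h : f.SameCycle x y) :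
    (f ^ 2).SameCycle x y ∨ (f ^ 2).SameCycle (f x) y := by
  obtain ⟨k, rfl⟩ := h
  rcases Int.even_or_odd' k with ⟨m, rfl | rfl⟩
  · exact .inl ⟨m, by rw [← zpow_natCast, ← zpow_mul]; rfl⟩
  · refine .inr ⟨m, ?_⟩
    rw [← zpow_natCast, ← zpow_mul, zpow_add_one, mul_apply]
    rfl

theorem IsCycleOn.not_sameCycle_sq_apply {s : Finset α} (hf : f.IsCycleOn s) (hs : Even s.card)
    {a : α} (ha : a ∈ s) : ¬ (f ^ 2).SameCycle a (f a) := by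
  rintro ⟨k, hk⟩
  have hfix : (f ^ (2 * k - 1)) a = a := by
    rw [sub_eq_neg_add, zpow_add, mul_apply, zpow_mul, zpow_ofNat, hk, zpow_neg_one, coe_inv,
      symm_apply_apply]
  have := (Int.natCast_dvd_natCast.2 hs.two_dvd).trans ((hf.zpow_apply_eq ha).1 hfix)
  omega

theorem IsCycleOn.ncard_sameCycle_sq [Fintype α] (hf : f.IsCycleOn .univ) {n : ℕ}
    (hcard : Fintype.card α = 2 * n) (x : α) : {y | (f ^ 2).SameCycle x y}.ncard = n := by
  let S : α → Set α := fun z => {y | (f ^ 2).SameCycle z y}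
  show (S x).ncard = n
  have hf' : f.IsCycleOn (Finset.univ : Finset α) := by rwa [Finset.coe_univ]
  have hdisj : _root_.Disjoint (S x) (S (f x)) := Set.disjoint_left.2 fun y hx hfx =>
    hf'.not_sameCycle_sq_apply (by simp [hcard]) (Finset.mem_univ x) (hx.trans hfx.symm)
  have hcover : S x ∪ S (f x) = .univ := _root_.Set.eq_univ_of_forall fun y =>
    (hf.2 (_root_.Set.mem_univ x) (_root_.Set.mem_univ y)).sameCycle_sq_or_sameCycle_sq_apply
  have hshift : (S (f x)).ncard = (S x).ncard := by
    have : S x = f ⁻¹' S (f x) := Set.ext fun y => sameCycle_pow_apply_apply.symm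
    rw [this, Set.ncard_preimage_of_injective_subset_range f.injective (by simp)]
  have := Set.ncard_union_eq hdisj
  rw [hcover, Set.ncard_univ, Nat.card_eq_fintype_card, hshift] at this
  omega

theorem sameCycle_iff_of_parity_change [Fintype α] [DecidableEq α] (χ : α → ZMod 2) {p q : α}
    (hχ : ∀ x, χ (f x) - χ x = (if f x = p then 1 else 0) + (if f x = q then 1 else 0))
    (a : α) : f.SameCycle a p ↔ f.SameCycle a q := by
  -- Summed over the orbit of `a`, the left-hand side telescopes to zero.
  set O := Finset.univ.filter (f.SameCycle a)
  have hshift (g : α → ZMod 2) : ∑ x ∈ O, g (f x) = ∑ x ∈ O, g x :=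
    Finset.sum_equiv f (by simp [O, sameCycle_apply_right]) fun _ _ => rfl
  have hsum := Finset.sum_congr rfl fun x (_ : x ∈ O) => hχ x
  rw [Finset.sum_sub_distrib, hshift, sub_self, Finset.sum_add_distrib,
    hshift fun y => if y = p then 1 else 0, hshift fun y => if y = q then 1 else 0,
    Finset.sum_ite_eq', Finset.sum_ite_eq'] at hsum
  simp only [O, Finset.mem_filter, Finset.mem_univ, true_and] at hsum
  constructor <;> intro h <;> by_contra h' <;> simp [h, h'] at hsum

end Equiv.Perm

theorem SimpleGraph.IsBridge.exists_zmod_two_cut {V : Type*} {G : SimpleGraph V} {u w : V}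
    (h : G.IsBridge s(u, w)) :
    ∃ χ : V → ZMod 2, χ u = 1 ∧ χ w = 0 ∧
      ∀ v v', G.Adj v v' → s(v, v') ≠ s(u, w) → χ v = χ v' := by
  classical
  let G' := G.deleteEdges {s(u, w)}
  refine ⟨fun v => if G'.Reachable u v then 1 else 0, if_pos .rfl,
    if_neg (SimpleGraph.isBridge_iff.1 h), fun v v' hadj hne => ?_⟩
  have hadj' : G'.Adj v v' := SimpleGraph.deleteEdges_adj.2 ⟨hadj, hne⟩
  exact if_congr ⟨fun hv => hv.trans hadj'.reachable, fun hv' => hv'.trans hadj'.symm.reachable⟩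
    rfl rfl

namespace RibbonGraph

variable {V H : Type} (r : RibbonGraph V H)

theorem s_σ (x : H) : r.s (r.σ x) = r.s x :=
  (r.orbit_fiber (r.σ x) x).1 ⟨-1, by simp⟩

theorem underlying_adj {g : H} (hg : r.s g ≠ r.s (r.ι g)) :
    r.underlying.Adj (r.s g) (r.s (r.ι g)) := by
  rw [underlying, SimpleGraph.fromRel_adj]
  exact ⟨hg, .inl ⟨g, rfl, rfl⟩⟩

theorem eq_univ_of_ι_σ_invariant [Finite H] (hconn : r.underlying.Connected) {O : Set H}
    (hO : O.Nonempty) (hι : ∀ y ∈ O, r.ι y ∈ O) (hσ : ∀ y ∈ O, r.σ y ∈ O) : O = .univ := by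
  have hfiber : ∀ y ∈ O, ∀ z, r.s y = r.s z → z ∈ O := fun y hy z hyz => by
    obtain ⟨n, rfl⟩ := ((r.orbit_fiber y z).2 hyz).exists_nat_pow_eq
    exact Set.MapsTo.perm_pow hσ n hy
  have hstep : ∀ v w, r.underlying.Adj v w → (∃ y ∈ O, r.s y = v) → ∃ y ∈ O, r.s y = w := by
    rintro v w hadj ⟨y, hy, rfl⟩
    rw [underlying, SimpleGraph.fromRel_adj] at hadj
    rcases hadj.2 with ⟨g, hg, rfl⟩ | ⟨g, rfl, hg⟩
    · exact ⟨r.ι g, hι g (hfiber y hy g hg.symm), rfl⟩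
    · refine ⟨g, ?_, rfl⟩
      rw [← r.ι_invol g]
      exact hι _ (hfiber y hy _ hg.symm)
  obtain ⟨y, hy⟩ := hO
  have hvertex (v : V) : ∃ y' ∈ O, r.s y' = v := by
    induction (SimpleGraph.reachable_iff_reflTransGen _ _).1 (hconn.preconnected (r.s y) v) with
    | refl => exact ⟨y, hy, rfl⟩
    | tail _ hadj ih => exact hstep _ _ hadj ih
  refine Set.eq_univ_of_forall fun z => ?_
  obtain ⟨y', hy', hz⟩ := hvertex (r.s z)
  exact hfiber y' hy' z hz

variable {r}

theorem IsTreeRibbon.eq_or_eq_ι_of_ends_eq (htree : r.IsTreeRibbon) {g h : H}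
    (he : s(r.s g, r.s (r.ι g)) = s(r.s h, r.s (r.ι h))) : g = h ∨ g = r.ι h := by
  rcases Sym2.eq_iff.1 he with ⟨h₁, h₂⟩ | ⟨h₁, h₂⟩
  · exact htree.2.2 g h h₁ h₂
  · rcases htree.2.2 (r.ι g) h h₂ (by rwa [r.ι_invol]) with hgh | hgh
    · exact .inr (by rw [← hgh, r.ι_invol])
    · exact .inl (r.ι.injective hgh)

theorem IsTreeRibbon.sameCycle_ι_iff [Fintype H] (htree : r.IsTreeRibbon) (a h₀ : H) :
    (r.ι * r.σ).SameCycle a h₀ ↔ (r.ι * r.σ).SameCycle a (r.ι h₀) := by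
  classical
  have hbridge := SimpleGraph.isAcyclic_iff_forall_adj_isBridge.1 htree.1.isAcyclic
    (r.underlying_adj (htree.2.1 h₀))
  obtain ⟨χ, hu, hw, hχ⟩ := hbridge.exists_zmod_two_cut
  have hcut (g : H) : χ (r.s (r.ι g)) - χ (r.s g) =
      (if r.ι g = h₀ then 1 else 0) + (if r.ι g = r.ι h₀ then 1 else 0) := by
    by_cases hg : g = h₀
    · subst hg
      simp [hu, hw, r.ι_ne g]
    by_cases hg' : g = r.ι h₀
    · subst hg'
      simp [r.ι_invol, hu, hw, (r.ι_ne h₀).symm]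
    have hne : s(r.s g, r.s (r.ι g)) ≠ s(r.s h₀, r.s (r.ι h₀)) := fun he =>
      (htree.eq_or_eq_ι_of_ends_eq he).elim hg hg'
    have hιg : r.ι g ≠ h₀ := fun h => hg' (by rw [← h, r.ι_invol])
    rw [hχ _ _ (r.underlying_adj (htree.2.1 g)) hne]
    simp [hg, hιg]
  refine Equiv.Perm.sameCycle_iff_of_parity_change (χ ∘ r.s) (fun x => ?_) a
  rw [Function.comp_apply, Function.comp_apply, Equiv.Perm.mul_apply, ← r.s_σ x]
  exact hcut (r.σ x)

theorem IsTreeRibbon.isCycleOn_univ [Fintype H] (htree : r.IsTreeRibbon) :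
    (r.ι * r.σ).IsCycleOn .univ := by
  refine ⟨(r.ι * r.σ).bijective.bijOn_univ, fun a _ b _ => ?_⟩
  have hι : ∀ y, (r.ι * r.σ).SameCycle a y → (r.ι * r.σ).SameCycle a (r.ι y) :=
    fun y => (htree.sameCycle_ι_iff a y).1
  have hσ : ∀ y, (r.ι * r.σ).SameCycle a y → (r.ι * r.σ).SameCycle a (r.σ y) := fun y hy => by
    simpa only [Equiv.Perm.mul_apply, r.ι_invol] using hι _ hy.apply_right
  have hO : {y | (r.ι * r.σ).SameCycle a y} = .univ :=
    r.eq_univ_of_ι_σ_invariant htree.1.connected ⟨a, .rfl⟩ hι hσ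
  exact Set.eq_univ_iff_forall.1 hO b

end RibbonGraph

theorem tree_ribbon_two_double_stepped_green_walks_general {V H : Type} [Fintype H] [Nonempty H]
    (r : RibbonGraph V H) (htree : r.IsTreeRibbon)
    (nE : ℕ) (hE : Fintype.card H = 2 * nE) :
    (∃ a b : H, ¬ ((r.ι * r.σ) ^ 2).SameCycle a b ∧
        ∀ x : H, ((r.ι * r.σ) ^ 2).SameCycle a x ∨ ((r.ι * r.σ) ^ 2).SameCycle b x) ∧
    ∀ x : H, {y : H | ((r.ι * r.σ) ^ 2).SameCycle x y}.ncard = nE := by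
  have hcyc := htree.isCycleOn_univ
  have hcyc' : (r.ι * r.σ).IsCycleOn (Finset.univ : Finset H) := by rwa [Finset.coe_univ]
  obtain ⟨a⟩ := ‹Nonempty H›
  refine ⟨⟨a, (r.ι * r.σ) a, ?_, fun x => ?_⟩, hcyc.ncard_sameCycle_sq hE⟩
  · exact hcyc'.not_sameCycle_sq_apply (by simp [hE]) (Finset.mem_univ a)
  · exact (hcyc.2 (Set.mem_univ a) (Set.mem_univ x)).sameCycle_sq_or_sameCycle_sq_apply

/-- If the underlying multigraph of a ribbon graph `(V, H, s, ι, σ)` (with at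
least one half-edge) is a tree with edge set `E` (so `|H| = 2|E|`), then the permutation
`(ι ∘ σ)²` of `H` has exactly two orbits, each of cardinality `|E|`. -/
theorem tree_ribbon_two_double_stepped_green_walks {V H : Type} [Fintype V] [Fintype H]
    [DecidableEq V] [DecidableEq H] [Nonempty H]
    (r : RibbonGraph V H) (htree : r.IsTreeRibbon)
    (nE : ℕ) (hE : Fintype.card H = 2 * nE) :
    (∃ a b : H, ¬ ((r.ι * r.σ) ^ 2).SameCycle a b ∧
        ∀ x : H, ((r.ι * r.σ) ^ 2).SameCycle a x ∨ ((r.ι * r.σ) ^ 2).SameCycle b x) ∧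
    ∀ x : H, {y : H | ((r.ι * r.σ) ^ 2).SameCycle x y}.ncard = nE :=
  tree_ribbon_two_double_stepped_green_walks_general r htree nE hE
end

section
/- Let Γ = (V, H, s, ι, σ) be a ribbon graph whose underlying multigraph is a tree. Then for every half-edge h ∈ H, the half-edges h and ι(h) lie in different orbits of the permutation (ι ∘ σ)². Equivalently, the involution ι interchanges the two orbits of (ι ∘ σ)². -/
theorem Equiv.Perm.SameCycle.apply_eq_of_forall_apply_eq {α β : Type*} {f : Equiv.Perm α}
    {g : α → β} (hg : ∀ x, g (f x) = g x) {x y : α} (hxy : f.SameCycle x y) : g x = g y := by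
  obtain ⟨i, rfl⟩ := hxy
  induction i using Int.induction_on generalizing x with
  | zero => simp
  | succ i ih => rw [zpow_add_one, Equiv.Perm.mul_apply, ← ih, hg]
  | pred i ih =>
    rw [zpow_sub_one, Equiv.Perm.mul_apply, ← ih, ← hg (f⁻¹ x), Equiv.Perm.coe_inv,
      Equiv.apply_symm_apply]

theorem SimpleGraph.Coloring.apply_eq_add_one_of_adj {V : Type*} {G : SimpleGraph V}
    (C : G.Coloring (Fin 2)) {v w : V} (hvw : G.Adj v w) : C w = C v + 1 := by
  have hne := C.valid hvw
  generalize C v = a, C w = b at hne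
  revert a b
  decide

namespace RibbonGraph

variable {V H : Type} (r : RibbonGraph V H)

theorem s_σ_apply (h : H) : r.s (r.σ h) = r.s h :=
  (r.orbit_fiber (r.σ h) h).mp ⟨-1, by simp⟩

theorem underlying_adj_s_ι (hloop : ∀ h, r.s h ≠ r.s (r.ι h)) (h : H) :
    r.underlying.Adj (r.s h) (r.s (r.ι h)) :=
  (SimpleGraph.fromRel_adj _ _ _).mpr ⟨hloop h, Or.inl ⟨h, rfl, rfl⟩⟩

theorem not_sameCycle_sq_ι_mul_σ_of_isBipartite (hloop : ∀ h, r.s h ≠ r.s (r.ι h))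
    (hbip : r.underlying.IsBipartite) (h : H) :
    ¬ ((r.ι * r.σ) ^ 2).SameCycle h (r.ι h) := by
  obtain ⟨C⟩ := hbip
  have colour_ι (x : H) : C (r.s (r.ι x)) = C (r.s x) + 1 :=
    C.apply_eq_add_one_of_adj (r.underlying_adj_s_ι hloop x)
  have colour_sq (x : H) : C (r.s (((r.ι * r.σ) ^ 2) x)) = C (r.s x) := by
    simp only [sq, Equiv.Perm.mul_apply, colour_ι, s_σ_apply, add_assoc]
    exact add_eq_left.mpr rfl
  intro hsame
  have same_colour := hsame.apply_eq_of_forall_apply_eq (g := fun x => C (r.s x)) colour_sq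
  rw [colour_ι] at same_colour
  exact one_ne_zero (left_eq_add.mp same_colour)

end RibbonGraph

theorem tree_ribbon_iota_swaps_double_green_walks_general {V H : Type}
    (r : RibbonGraph V H) (htree : r.IsTreeRibbon) :
    ∀ h : H, ¬ ((r.ι * r.σ) ^ 2).SameCycle h (r.ι h) :=
  r.not_sameCycle_sq_ι_mul_σ_of_isBipartite htree.2.1 htree.1.isAcyclic.isBipartite

/-- If the underlying multigraph of a ribbon graph `(V, H, s, ι, σ)` is a tree,
then for every half-edge `h`, the half-edges `h` and `ι h` lie in different orbits of the
permutation `(ι ∘ σ)²`; i.e. `ι` interchanges the two orbits of `(ι ∘ σ)²`. -/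
theorem tree_ribbon_iota_swaps_double_green_walks {V H : Type} [Fintype V] [Fintype H]
    [DecidableEq V] [DecidableEq H]
    (r : RibbonGraph V H) (htree : r.IsTreeRibbon) :
    ∀ h : H, ¬ ((r.ι * r.σ) ^ 2).SameCycle h (r.ι h) :=
  tree_ribbon_iota_swaps_double_green_walks_general r htree
end
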